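/- arXiv:2109.01566 — 2 statements merged into one kernel-verified Lean document; each statement's English description precedes it below -/
import Mathlib

section
/- Let 0 < σ₁ < σ₂, A > 0, let X* be a random variable with |X*| ≤ A a.s., and let f_{Y₁}(y) = E[φ_{σ₁}(y − X*)], f_{Y₂}(y) = E[φ_{σ₂}(y − X*)]. Define g(y) = E[log f_{Y₂}(y + N)] − log f_{Y₁}(y) with N ~ N(0, σ₂² − σ₁²) independent of X*. Then for all |y| ≥ A: g(y) ≥ log(σ₁/σ₂) − (|y| + A)²/(2σ₂²) − (σ₂² − σ₁²)/(2σ₂²) + (|y| − A)²/(2σ₁²). -/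
/-!
Jensen's inequality for `exp` gives `log f_{Y₂}(z) ≥ log φ_{σ₂}(0) - E(z - X*)² / (2σ₂²)`, a
quadratic polynomial in `z`; averaging it over `z = y + N` adds `E N² = σ₂² - σ₁²` to
`E(y - X*)² ≤ (|y| + A)²`. For `|y| ≥ A` every `|y - X*| ≥ |y| - A`, so
`f_{Y₁}(y) ≤ φ_{σ₁}(|y| - A)`. The normalising constants of `φ_{σ₂}` and `φ_{σ₁}` contribute
`log (σ₁ / σ₂)`.
-/

open MeasureTheory Real

noncomputable def gaussPdf (σ t : ℝ) : ℝ :=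
  (Real.sqrt (2 * Real.pi * σ ^ 2))⁻¹ * Real.exp (-(t ^ 2) / (2 * σ ^ 2))

open ProbabilityTheory
open scoped NNReal

lemma gaussPdf_eq_mul_exp (σ t : ℝ) :
    gaussPdf σ t = gaussPdf σ 0 * exp (-(t ^ 2) / (2 * σ ^ 2)) := by
  simp [gaussPdf]

lemma gaussPdf_zero (σ : ℝ) : gaussPdf σ 0 = (√(2 * π) * |σ|)⁻¹ := by
  simp [gaussPdf, sqrt_mul (by positivity : (0 : ℝ) ≤ 2 * π), sqrt_sq_eq_abs]

lemma gaussPdf_nonneg (σ t : ℝ) : 0 ≤ gaussPdf σ t := by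
  unfold gaussPdf
  positivity

lemma gaussPdf_pos {σ : ℝ} (hσ : σ ≠ 0) (t : ℝ) : 0 < gaussPdf σ t := by
  rw [gaussPdf_eq_mul_exp, gaussPdf_zero]
  have := abs_pos.2 hσ
  positivity

lemma gaussPdf_le_of_abs_le (σ : ℝ) {s t : ℝ} (h : |s| ≤ |t|) :
    gaussPdf σ t ≤ gaussPdf σ s := by
  unfold gaussPdf
  gcongr ?_ * exp ?_
  exact div_le_div_of_nonneg_right (neg_le_neg (sq_le_sq.2 h)) (by positivity)

lemma gaussPdf_le_gaussPdf_zero (σ t : ℝ) : gaussPdf σ t ≤ gaussPdf σ 0 :=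
  gaussPdf_le_of_abs_le σ (by simp)

lemma log_gaussPdf {σ : ℝ} (hσ : σ ≠ 0) (t : ℝ) :
    log (gaussPdf σ t) = log (gaussPdf σ 0) - t ^ 2 / (2 * σ ^ 2) := by
  rw [gaussPdf_eq_mul_exp, log_mul (gaussPdf_pos hσ 0).ne' (exp_ne_zero _), log_exp, neg_div,
    sub_eq_add_neg]

lemma log_gaussPdf_zero_sub {σ τ : ℝ} (hσ : 0 < σ) (hτ : 0 < τ) :
    log (gaussPdf τ 0) - log (gaussPdf σ 0) = log (σ / τ) := by
  have hc : 0 < √(2 * π) := by positivity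
  rw [gaussPdf_zero, gaussPdf_zero, abs_of_pos hσ, abs_of_pos hτ, log_inv, log_inv,
    log_mul hc.ne' hτ.ne', log_mul hc.ne' hσ.ne', log_div hσ.ne' hτ.ne']
  ring

@[fun_prop]
lemma continuous_gaussPdf (σ : ℝ) : Continuous (gaussPdf σ) := by
  unfold gaussPdf
  fun_prop

lemma integral_mul_gaussPdf {σ : ℝ} (hσ : σ ≠ 0) (f : ℝ → ℝ) :
    ∫ t, f t * gaussPdf σ t = ∫ t, f t ∂gaussianReal 0 (σ ^ 2).toNNReal := by
  rw [integral_gaussianReal_eq_integral_smul (by simpa using hσ)]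
  congr with t
  rw [gaussianPDFReal, Real.coe_toNNReal _ (sq_nonneg σ), gaussPdf, smul_eq_mul, sub_zero]
  ring

lemma integral_sq_gaussianReal (v : ℝ≥0) : ∫ x, x ^ 2 ∂gaussianReal 0 v = v := by
  rw [← variance_fun_id_gaussianReal (μ := 0) (v := v),
    variance_of_integral_eq_zero measurable_id'.aemeasurable (by simp)]

section Moments

variable {μ : Measure ℝ} {A : ℝ}

lemma sub_sq_le_add_sq {x : ℝ} (hx : |x| ≤ A) (z : ℝ) : (z - x) ^ 2 ≤ (|z| + A) ^ 2 := by
  rw [← sq_abs]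
  have := abs_sub z x
  have := abs_nonneg (z - x)
  gcongr
  linarith

lemma integrable_id_of_abs_le [IsFiniteMeasure μ] (hμ : ∀ᵐ x ∂μ, |x| ≤ A) :
    Integrable (fun x => x) μ :=
  .of_bound measurable_id.aestronglyMeasurable A hμ

lemma integrable_sub_sq_of_abs_le [IsFiniteMeasure μ] (hμ : ∀ᵐ x ∂μ, |x| ≤ A) (z : ℝ) :
    Integrable (fun x => (z - x) ^ 2) μ := by
  refine .of_bound (by fun_prop) ((|z| + A) ^ 2) ?_
  filter_upwards [hμ] with x hx
  rw [norm_of_nonneg (sq_nonneg _)]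
  exact sub_sq_le_add_sq hx z

lemma integral_sub_sq_le [IsProbabilityMeasure μ] (hμ : ∀ᵐ x ∂μ, |x| ≤ A) (z : ℝ) :
    ∫ x, (z - x) ^ 2 ∂μ ≤ (|z| + A) ^ 2 := by
  calc ∫ x, (z - x) ^ 2 ∂μ ≤ ∫ _, (|z| + A) ^ 2 ∂μ :=
        integral_mono_ae (integrable_sub_sq_of_abs_le hμ z) (integrable_const _)
          (by filter_upwards [hμ] with x hx using sub_sq_le_add_sq hx z)
    _ = (|z| + A) ^ 2 := by simp

lemma integral_add_sub_sq [IsProbabilityMeasure μ] (y n : ℝ) (hμ₁ : Integrable (fun x => x) μ)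
    (hμ₂ : Integrable (fun x => (y - x) ^ 2) μ) :
    ∫ x, (y + n - x) ^ 2 ∂μ = (∫ x, (y - x) ^ 2 ∂μ) + 2 * (y - ∫ x, x ∂μ) * n + n ^ 2 := by
  have hlin : Integrable (fun x => 2 * n * (y - x)) μ :=
    ((integrable_const y).sub hμ₁).const_mul _
  calc ∫ x, (y + n - x) ^ 2 ∂μ = ∫ x, ((y - x) ^ 2 + 2 * n * (y - x) + n ^ 2) ∂μ := by
        congr with x; ring
    _ = _ := by
        rw [integral_add (f := fun x => (y - x) ^ 2 + 2 * n * (y - x)) (hμ₂.add hlin)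
          (integrable_const _), integral_add hμ₂ hlin, integral_const_mul,
          integral_sub (integrable_const y) hμ₁]
        simp only [integral_const, probReal_univ, one_smul]
        ring

end Moments

/-- The density `f_Y` of `X + σ Z` for `X ∼ μ` and an independent standard normal `Z`. -/
noncomputable def gaussMixPdf (μ : Measure ℝ) (σ z : ℝ) : ℝ :=
  ∫ x, gaussPdf σ (z - x) ∂μ

section Mixture

variable {μ : Measure ℝ}

lemma integrable_gaussPdf_sub [IsFiniteMeasure μ] (σ z : ℝ) :
    Integrable (fun x => gaussPdf σ (z - x)) μ := by
  refine .of_bound (by fun_prop) (gaussPdf σ 0) (ae_of_all _ fun x => ?_)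
  rw [norm_of_nonneg (gaussPdf_nonneg σ _)]
  exact gaussPdf_le_gaussPdf_zero σ _

lemma continuous_gaussMixPdf [IsFiniteMeasure μ] (σ : ℝ) : Continuous (gaussMixPdf μ σ) := by
  refine continuous_of_dominated (bound := fun _ => gaussPdf σ 0) ?_ ?_ (integrable_const _) ?_
  · exact fun z => (integrable_gaussPdf_sub σ z).aestronglyMeasurable
  · refine fun z => ae_of_all _ fun x => ?_
    rw [norm_of_nonneg (gaussPdf_nonneg σ _)]
    exact gaussPdf_le_gaussPdf_zero σ _
  · exact ae_of_all _ fun x => (continuous_gaussPdf σ).comp (continuous_id.sub continuous_const)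

variable [IsProbabilityMeasure μ]

lemma gaussMixPdf_le_gaussPdf_zero (σ z : ℝ) : gaussMixPdf μ σ z ≤ gaussPdf σ 0 := by
  calc gaussMixPdf μ σ z ≤ ∫ _, gaussPdf σ 0 ∂μ :=
        integral_mono (integrable_gaussPdf_sub σ z) (integrable_const _)
          fun x => gaussPdf_le_gaussPdf_zero σ _
    _ = gaussPdf σ 0 := by simp

lemma gaussMixPdf_le_gaussPdf {A y : ℝ} (hμ : ∀ᵐ x ∂μ, |x| ≤ A) (σ : ℝ) (hy : A ≤ |y|) :
    gaussMixPdf μ σ y ≤ gaussPdf σ (|y| - A) := by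
  calc gaussMixPdf μ σ y ≤ ∫ _, gaussPdf σ (|y| - A) ∂μ := by
        refine integral_mono_ae (integrable_gaussPdf_sub σ y) (integrable_const _) ?_
        filter_upwards [hμ] with x hx
        refine gaussPdf_le_of_abs_le σ ?_
        rw [abs_of_nonneg (sub_nonneg.2 hy)]
        linarith [abs_sub_abs_le_abs_sub y x]
    _ = gaussPdf σ (|y| - A) := by simp

/-- Jensen's inequality for the convex function `exp`. -/
lemma gaussPdf_zero_mul_exp_le_gaussMixPdf (σ z : ℝ)
    (hint : Integrable (fun x => (z - x) ^ 2) μ) :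
    gaussPdf σ 0 * exp (-(∫ x, (z - x) ^ 2 ∂μ) / (2 * σ ^ 2)) ≤ gaussMixPdf μ σ z := by
  have hexp_int : Integrable (fun x => exp (-(z - x) ^ 2 / (2 * σ ^ 2))) μ := by
    refine .of_bound (by fun_prop) 1 (ae_of_all _ fun x => ?_)
    rw [norm_of_nonneg (exp_nonneg _), exp_le_one_iff]
    exact div_nonpos_of_nonpos_of_nonneg (neg_nonpos.2 (sq_nonneg _)) (by positivity)
  have hjensen := convexOn_exp.map_integral_le continuous_exp.continuousOn isClosed_univ
    (ae_of_all μ fun x => Set.mem_univ (-(z - x) ^ 2 / (2 * σ ^ 2))) (hint.neg.div_const _)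
    hexp_int
  rw [integral_div, integral_neg] at hjensen
  rw [gaussMixPdf]
  simp_rw [gaussPdf_eq_mul_exp σ (z - _)]
  rw [integral_const_mul]
  exact mul_le_mul_of_nonneg_left hjensen (gaussPdf_nonneg σ 0)

lemma gaussMixPdf_pos {σ z : ℝ} (hσ : σ ≠ 0) (hint : Integrable (fun x => (z - x) ^ 2) μ) :
    0 < gaussMixPdf μ σ z :=
  (mul_pos (gaussPdf_pos hσ 0) (exp_pos _)).trans_le
    (gaussPdf_zero_mul_exp_le_gaussMixPdf σ z hint)

lemma log_gaussMixPdf_ge {σ z : ℝ} (hσ : σ ≠ 0) (hint : Integrable (fun x => (z - x) ^ 2) μ) :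
    log (gaussPdf σ 0) - (∫ x, (z - x) ^ 2 ∂μ) / (2 * σ ^ 2) ≤ log (gaussMixPdf μ σ z) := by
  have h := log_le_log (by have := gaussPdf_pos hσ 0; positivity)
    (gaussPdf_zero_mul_exp_le_gaussMixPdf σ z hint)
  rwa [log_mul (gaussPdf_pos hσ 0).ne' (exp_ne_zero _), log_exp, neg_div, ← sub_eq_add_neg] at h

lemma log_gaussMixPdf_le {σ : ℝ} (hσ : σ ≠ 0) (z : ℝ)
    (hint : Integrable (fun x => (z - x) ^ 2) μ) :
    log (gaussMixPdf μ σ z) ≤ log (gaussPdf σ 0) :=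
  log_le_log (gaussMixPdf_pos hσ hint) (gaussMixPdf_le_gaussPdf_zero σ z)

end Mixture

lemma integral_log_gaussMixPdf_add_ge {μ ν : Measure ℝ} [IsProbabilityMeasure μ]
    [IsProbabilityMeasure ν] {A σ : ℝ} (hμ : ∀ᵐ x ∂μ, |x| ≤ A) (hσ : σ ≠ 0)
    (hν₁ : Integrable (fun n => n) ν) (hν₂ : Integrable (fun n => n ^ 2) ν)
    (hν₀ : ∫ n, n ∂ν = 0) (y : ℝ) :
    log (gaussPdf σ 0) - ((∫ x, (y - x) ^ 2 ∂μ) + ∫ n, n ^ 2 ∂ν) / (2 * σ ^ 2)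
      ≤ ∫ n, log (gaussMixPdf μ σ (y + n)) ∂ν := by
  have hjensen n := log_gaussMixPdf_ge (μ := μ) hσ (integrable_sub_sq_of_abs_le hμ (y + n))
  simp_rw [integral_add_sub_sq y _ (integrable_id_of_abs_le hμ)
    (integrable_sub_sq_of_abs_le hμ y)] at hjensen
  set Q := ∫ x, (y - x) ^ 2 ∂μ
  set m := ∫ x, x ∂μ
  -- The Jensen bound is a quadratic polynomial in `n`, hence `ν`-integrable; squeezed between it
  -- and the constant `log (gaussPdf σ 0)`, the integrand is integrable too.
  have hlin :
      Integrable (fun n => log (gaussPdf σ 0) - Q / (2 * σ ^ 2) - (y - m) / σ ^ 2 * n) ν :=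
    (integrable_const _).sub (hν₁.const_mul _)
  have hL_int : Integrable (fun n => log (gaussPdf σ 0) - Q / (2 * σ ^ 2) - (y - m) / σ ^ 2 * n
      - n ^ 2 / (2 * σ ^ 2)) ν :=
    hlin.sub (hν₂.div_const _)
  have hL_integral : ∫ n, (log (gaussPdf σ 0) - Q / (2 * σ ^ 2) - (y - m) / σ ^ 2 * n
      - n ^ 2 / (2 * σ ^ 2)) ∂ν = log (gaussPdf σ 0) - (Q + ∫ n, n ^ 2 ∂ν) / (2 * σ ^ 2) := by
    rw [integral_sub hlin (hν₂.div_const _), integral_sub (integrable_const _) (hν₁.const_mul _),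
      integral_const_mul, integral_div, hν₀]
    simp only [integral_const, probReal_univ, one_smul]
    ring
  have hL_le n : log (gaussPdf σ 0) - Q / (2 * σ ^ 2) - (y - m) / σ ^ 2 * n
      - n ^ 2 / (2 * σ ^ 2) ≤ log (gaussMixPdf μ σ (y + n)) :=
    (hjensen n).trans_eq' (by field_simp; ring)
  have hf_int : Integrable (fun n => log (gaussMixPdf μ σ (y + n))) ν :=
    integrable_of_le_of_le
      ((continuous_gaussMixPdf σ).comp
        (continuous_const_add y)).measurable.log.aestronglyMeasurable
      (ae_of_all _ hL_le)
      (ae_of_all _ fun n => log_gaussMixPdf_le hσ _ (integrable_sub_sq_of_abs_le hμ (y + n)))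
      hL_int (integrable_const _)
  rw [← hL_integral]
  exact integral_mono hL_int hf_int hL_le

theorem g_lower_bound_general
    (σ1 σ2 A : ℝ) (h1 : 0 < σ1) (h12 : σ1 < σ2)
    (μ : Measure ℝ) [IsProbabilityMeasure μ] (hμ : ∀ᵐ x ∂μ, |x| ≤ A)
    (fY1 fY2 g : ℝ → ℝ)
    (hfY1 : ∀ y, fY1 y = ∫ x, gaussPdf σ1 (y - x) ∂μ)
    (hfY2 : ∀ y, fY2 y = ∫ x, gaussPdf σ2 (y - x) ∂μ)
    (hg : ∀ y, g y =
      (∫ n, Real.log (fY2 (y + n)) * gaussPdf (Real.sqrt (σ2 ^ 2 - σ1 ^ 2)) n)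
        - Real.log (fY1 y)) :
    ∀ y : ℝ, A ≤ |y| →
      g y ≥ Real.log (σ1 / σ2) - (|y| + A) ^ 2 / (2 * σ2 ^ 2)
            - (σ2 ^ 2 - σ1 ^ 2) / (2 * σ2 ^ 2) + (|y| - A) ^ 2 / (2 * σ1 ^ 2) := by
  intro y hy
  obtain rfl : fY1 = gaussMixPdf μ σ1 := funext hfY1
  obtain rfl : fY2 = gaussMixPdf μ σ2 := funext hfY2
  have hσ2 : 0 < σ2 := h1.trans h12
  set τ := √(σ2 ^ 2 - σ1 ^ 2)
  have hτ_sq : τ ^ 2 = σ2 ^ 2 - σ1 ^ 2 := sq_sqrt (by nlinarith)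
  have hτ : τ ≠ 0 := (Real.sqrt_pos.2 (by nlinarith)).ne'
  have hupper : log (gaussMixPdf μ σ1 y) ≤ log (gaussPdf σ1 0) - (|y| - A) ^ 2 / (2 * σ1 ^ 2) :=
    (log_le_log (gaussMixPdf_pos h1.ne' (integrable_sub_sq_of_abs_le hμ y))
      (gaussMixPdf_le_gaussPdf hμ σ1 hy)).trans_eq (log_gaussPdf h1.ne' _)
  have hlower := integral_log_gaussMixPdf_add_ge (ν := gaussianReal 0 (τ ^ 2).toNNReal)
    hμ hσ2.ne' ((memLp_id_gaussianReal 1).integrable le_rfl)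
    (memLp_id_gaussianReal 2).integrable_sq integral_id_gaussianReal y
  rw [integral_sq_gaussianReal, Real.coe_toNNReal _ (sq_nonneg τ)] at hlower
  have hQ : ((∫ x, (y - x) ^ 2 ∂μ) + τ ^ 2) / (2 * σ2 ^ 2)
      ≤ (|y| + A) ^ 2 / (2 * σ2 ^ 2) + (σ2 ^ 2 - σ1 ^ 2) / (2 * σ2 ^ 2) := by
    rw [hτ_sq, ← add_div]
    gcongr
    exact integral_sub_sq_le hμ y
  rw [hg, integral_mul_gaussPdf hτ, ← log_gaussPdf_zero_sub h1 hσ2]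
  linarith

/-- Lower bound on `g(y) = E[log f_{Y₂}(y+N)] − log f_{Y₁}(y)` for `|y| ≥ A`. -/
theorem g_lower_bound
    (σ1 σ2 A : ℝ) (h1 : 0 < σ1) (h12 : σ1 < σ2) (hA : 0 < A)
    (μ : Measure ℝ) [IsProbabilityMeasure μ] (hμ : ∀ᵐ x ∂μ, |x| ≤ A)
    (fY1 fY2 g : ℝ → ℝ)
    (hfY1 : ∀ y, fY1 y = ∫ x, gaussPdf σ1 (y - x) ∂μ)
    (hfY2 : ∀ y, fY2 y = ∫ x, gaussPdf σ2 (y - x) ∂μ)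
    (hg : ∀ y, g y =
      (∫ n, Real.log (fY2 (y + n)) * gaussPdf (Real.sqrt (σ2 ^ 2 - σ1 ^ 2)) n)
        - Real.log (fY1 y)) :
    ∀ y : ℝ, A ≤ |y| →
      g y ≥ Real.log (σ1 / σ2) - (|y| + A) ^ 2 / (2 * σ2 ^ 2)
            - (σ2 ^ 2 - σ1 ^ 2) / (2 * σ2 ^ 2) + (|y| - A) ^ 2 / (2 * σ1 ^ 2) :=
  g_lower_bound_general σ1 σ2 A h1 h12 μ hμ fY1 fY2 g hfY1 hfY2 hg
end

section
/- Tijdeman's number-of-zeros lemma: let R, s, t > 0 with s > 1, and let f be a nonzero complex-analytic function on the closed disk |z| ≤ (st + s + t)R. Then the number of zeros of f (with multiplicity) in the closed disk |z| ≤ R is at most (1/log s)·(log max_{|z| ≤ (st+s+t)R} |f(z)| − log max_{|z| ≤ tR} |f(z)|). -/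
/-!
Write `f = ∏ (w - z)^{m z} · G` with `G` analytic, `z` running over the given zeros, and set
`ρ = (st+s+t)R` and `N = ∑ m z`. The function `H(w) = G(w) ∏ (ρ² - z̄w)^{m z}` satisfies
`|H| = ρ^N |f|` on `|w| = ρ`, so by the maximum modulus principle `|H| ≤ ρ^N max_{|w|≤ρ} |f|` on
the disk. At a point `w` with `|w| ≤ tR` and a zero `|z| ≤ R` one has `|ρ² - z̄w| ≥ sρ|w - z|`;
evaluating at the point where `|f|` attains its maximum over `|w| ≤ tR` gives
`s^N max_{|w|≤tR} |f| ≤ max_{|w|≤ρ} |f|`.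
-/

open Metric

/-- The order (multiplicity) of a zero of `f` at `z`: the least `n` such that the `n`-th
iterated derivative of `f` at `z` is nonzero. -/
noncomputable def zeroOrder (f : ℂ → ℂ) (z : ℂ) : ℕ :=
  sInf {n : ℕ | iteratedDeriv n f z ≠ 0}

open Filter Topology ComplexConjugate

theorem natCast_zeroOrder_le_analyticOrderAt {f : ℂ → ℂ} {z : ℂ} (hf : AnalyticAt ℂ f z) :
    (zeroOrder f z : ℕ∞) ≤ analyticOrderAt f z :=
  (natCast_le_analyticOrderAt_iff_iteratedDeriv_eq_zero hf).2 fun _ hi =>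
    not_not.1 (Nat.notMem_of_lt_sInf hi)

section Analytic

variable {𝕜 : Type*} [NontriviallyNormedField 𝕜] {f : 𝕜 → 𝕜} {U : Set 𝕜}

theorem AnalyticOnNhd.exists_eq_pow_mul (hf : AnalyticOnNhd 𝕜 f U) {a : 𝕜} (ha : a ∈ U)
    {n : ℕ} (hn : (n : ℕ∞) ≤ analyticOrderAt f a) :
    ∃ G : 𝕜 → 𝕜, AnalyticOnNhd 𝕜 G U ∧ ∀ w, f w = (w - a) ^ n * G w := by
  classical
  obtain ⟨g, hg, hfg⟩ := (natCast_le_analyticOrderAt (hf a ha)).1 hn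
  have hquot : ∀ w ≠ a, (w - a) ^ n * (f w / (w - a) ^ n) = f w := fun w hw =>
    mul_div_cancel₀ _ (pow_ne_zero _ (sub_ne_zero.2 hw))
  refine ⟨fun w => if w = a then g a else f w / (w - a) ^ n, fun b hb => ?_, fun w => ?_⟩
  · by_cases hba : b = a
    · subst hba
      refine hg.congr ?_
      filter_upwards [hfg] with w hw
      by_cases hwb : w = b
      · simp [hwb]
      · rw [if_neg hwb, hw, smul_eq_mul, mul_div_cancel_left₀ _ (pow_ne_zero _ (sub_ne_zero.2 hwb))]
    · have hpow : AnalyticAt 𝕜 (fun w => (w - a) ^ n) b := by fun_prop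
      refine ((hf b hb).div hpow (pow_ne_zero _ (sub_ne_zero.2 hba))).congr ?_
      filter_upwards [isOpen_ne.mem_nhds hba] with w hw
      simp [hw]
  · by_cases hwa : w = a
    · subst hwa
      simpa using hfg.self_of_nhds
    · simp only [if_neg hwa, hquot w hwa]

theorem AnalyticOnNhd.exists_eq_prod_pow_mul (hf : AnalyticOnNhd 𝕜 f U) (Z : Finset 𝕜)
    (m : 𝕜 → ℕ) (hZ : ∀ z ∈ Z, z ∈ U ∧ (m z : ℕ∞) ≤ analyticOrderAt f z) :
    ∃ G : 𝕜 → 𝕜, AnalyticOnNhd 𝕜 G U ∧ ∀ w, f w = (∏ z ∈ Z, (w - z) ^ m z) * G w := by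
  classical
  induction Z using Finset.induction_on with
  | empty => exact ⟨f, hf, by simp⟩
  | @insert a Z haZ ih =>
    obtain ⟨G₁, hG₁, hfG₁⟩ := ih fun z hz => hZ z (Finset.mem_insert_of_mem hz)
    obtain ⟨haU, ham⟩ := hZ a (Finset.mem_insert_self a Z)
    set P : 𝕜 → 𝕜 := fun w => ∏ z ∈ Z, (w - z) ^ m z
    have hP : AnalyticAt 𝕜 P a := by fun_prop
    have hPa : P a ≠ 0 := Finset.prod_ne_zero_iff.2 fun z hz =>
      pow_ne_zero _ (sub_ne_zero.2 fun h => haZ (h ▸ hz))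
    have hG₁a : analyticOrderAt f a = analyticOrderAt G₁ a := by
      rw [show f = P * G₁ from funext hfG₁, analyticOrderAt_mul hP (hG₁ a haU),
        hP.analyticOrderAt_eq_zero.2 hPa, zero_add]
    obtain ⟨G, hG, hG₁G⟩ := hG₁.exists_eq_pow_mul haU (hG₁a ▸ ham)
    refine ⟨G, hG, fun w => ?_⟩
    rw [Finset.prod_insert haZ, hfG₁ w, hG₁G w]
    ring

theorem AnalyticOnNhd.exists_mem_ne_zero_of_mem_nhds {V : Set 𝕜} (hf : AnalyticOnNhd 𝕜 f U)
    (hU : IsPreconnected U) (hne : ∃ z ∈ U, f z ≠ 0) {x : 𝕜} (hx : x ∈ U) (hV : V ∈ 𝓝 x) :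
    ∃ z ∈ V, f z ≠ 0 := by
  by_contra! hV0
  obtain ⟨z, hz, hfz⟩ := hne
  exact hfz (hf.eqOn_zero_of_preconnected_of_eventuallyEq_zero hU hx
    (Filter.mem_of_superset hV hV0) hz)

end Analytic

section BlaschkeBound

variable {ρ : ℝ} {Z : Finset ℂ} {m : ℂ → ℕ} {f G : ℂ → ℂ}

theorem norm_sq_sub_conj_mul_of_norm_eq {w : ℂ} (hw : ‖w‖ = ρ) (z : ℂ) :
    ‖(ρ : ℂ) ^ 2 - conj z * w‖ = ρ * ‖w - z‖ := by
  have hww : (ρ : ℂ) ^ 2 = w * conj w := by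
    rw [Complex.mul_conj, Complex.normSq_eq_norm_sq, hw]
    push_cast
    rfl
  have : (ρ : ℂ) ^ 2 - conj z * w = w * conj (w - z) := by
    rw [map_sub, mul_sub, hww]
    ring
  rw [this, norm_mul, Complex.norm_conj, hw]

theorem norm_mul_prod_sq_sub_conj_mul_le (hρ : 0 < ρ)
    (hG : AnalyticOnNhd ℂ G (closedBall 0 ρ))
    (hfG : ∀ w, f w = (∏ z ∈ Z, (w - z) ^ m z) * G w) {M : ℝ}
    (hM : ∀ w ∈ sphere (0 : ℂ) ρ, ‖f w‖ ≤ M) {w₀ : ℂ} (hw₀ : w₀ ∈ closedBall (0 : ℂ) ρ) :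
    ‖G w₀‖ * ∏ z ∈ Z, ‖(ρ : ℂ) ^ 2 - conj z * w₀‖ ^ m z ≤ ρ ^ (∑ z ∈ Z, m z) * M := by
  set H : ℂ → ℂ := fun w => G w * ∏ z ∈ Z, ((ρ : ℂ) ^ 2 - conj z * w) ^ m z
  have hH : AnalyticOnNhd ℂ H (closedBall 0 ρ) := fun w hw => by
    have := hG w hw
    fun_prop
  have hHd : DiffContOnCl ℂ H (ball 0 ρ) := by
    refine ⟨fun w hw =>
      (hH w (ball_subset_closedBall hw)).differentiableAt.differentiableWithinAt, ?_⟩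
    rw [closure_ball _ hρ.ne']
    exact hH.continuousOn
  have hsphere : ∀ w ∈ frontier (ball (0 : ℂ) ρ), ‖H w‖ ≤ ρ ^ (∑ z ∈ Z, m z) * M := by
    intro w hw
    rw [frontier_ball _ hρ.ne'] at hw
    have hwρ : ‖w‖ = ρ := mem_sphere_zero_iff_norm.1 hw
    calc ‖H w‖ = ρ ^ (∑ z ∈ Z, m z) * ‖f w‖ := by
          simp only [H, hfG, norm_mul, norm_prod, norm_pow, norm_sq_sub_conj_mul_of_norm_eq hwρ,
            mul_pow, Finset.prod_mul_distrib, Finset.prod_pow_eq_pow_sum]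
          ring
      _ ≤ ρ ^ (∑ z ∈ Z, m z) * M := by gcongr; exact hM w hw
  have := Complex.norm_le_of_forall_mem_frontier_norm_le isBounded_ball hHd hsphere
    (by rwa [closure_ball _ hρ.ne'])
  simpa only [H, norm_mul, norm_prod, norm_pow] using this

theorem pow_mul_norm_le_of_eq_prod_mul (hρ : 0 < ρ)
    (hG : AnalyticOnNhd ℂ G (closedBall 0 ρ))
    (hfG : ∀ w, f w = (∏ z ∈ Z, (w - z) ^ m z) * G w) {M : ℝ}
    (hM : ∀ w ∈ sphere (0 : ℂ) ρ, ‖f w‖ ≤ M) {w₀ : ℂ} (hw₀ : w₀ ∈ closedBall (0 : ℂ) ρ)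
    {κ : ℝ} (hκ : 0 ≤ κ) (hκw₀ : ∀ z ∈ Z, κ * ρ * ‖w₀ - z‖ ≤ ‖(ρ : ℂ) ^ 2 - conj z * w₀‖) :
    κ ^ (∑ z ∈ Z, m z) * ‖f w₀‖ ≤ M := by
  have hρN : 0 < ρ ^ (∑ z ∈ Z, m z) := pow_pos hρ _
  refine le_of_mul_le_mul_left ?_ hρN
  calc ρ ^ (∑ z ∈ Z, m z) * (κ ^ (∑ z ∈ Z, m z) * ‖f w₀‖)
      = ‖G w₀‖ * ∏ z ∈ Z, (κ * ρ * ‖w₀ - z‖) ^ m z := by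
        simp only [hfG, norm_mul, norm_prod, norm_pow, mul_pow, Finset.prod_mul_distrib,
          Finset.prod_pow_eq_pow_sum]
        ring
    _ ≤ ‖G w₀‖ * ∏ z ∈ Z, ‖(ρ : ℂ) ^ 2 - conj z * w₀‖ ^ m z := by
        gcongr with z hz
        exact hκw₀ z hz
    _ ≤ ρ ^ (∑ z ∈ Z, m z) * M := norm_mul_prod_sq_sub_conj_mul_le hρ hG hfG hM hw₀

end BlaschkeBound

theorem mul_norm_sub_le_norm_sq_sub_conj_mul {R s t : ℝ} (hR : 0 ≤ R) (hs : 1 ≤ s) (ht : 0 ≤ t)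
    {z w : ℂ} (hz : ‖z‖ ≤ R) (hw : ‖w‖ ≤ t * R) :
    s * ((s * t + s + t) * R) * ‖w - z‖ ≤ ‖(((s * t + s + t) * R : ℝ) : ℂ) ^ 2 - conj z * w‖ := by
  set ρ := (s * t + s + t) * R
  have hρ : 0 ≤ ρ := by positivity
  calc s * ρ * ‖w - z‖ ≤ s * ρ * ((t + 1) * R) := by
        gcongr
        linarith [norm_sub_le w z]
    _ ≤ ρ ^ 2 - R * (t * R) := by
        have hRρ : R ≤ ρ := by nlinarith [mul_nonneg (mul_nonneg (by linarith : 0 ≤ s) ht) hR]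
        have hsub : ρ - s * ((t + 1) * R) = t * R := by ring
        nlinarith [mul_nonneg (mul_nonneg ht hR) (sub_nonneg.2 hRρ)]
    _ ≤ ‖(ρ : ℂ) ^ 2‖ - ‖conj z * w‖ := by
        rw [norm_mul, Complex.norm_conj, norm_pow, Complex.norm_real, Real.norm_of_nonneg hρ]
        gcongr
    _ ≤ ‖(ρ : ℂ) ^ 2 - conj z * w‖ := norm_sub_norm_le _ _

theorem natCast_le_div_log_of_pow_mul_le {s a b : ℝ} (hs : 1 < s) (ha : 0 < a) {N : ℕ}
    (h : s ^ N * a ≤ b) : (N : ℝ) ≤ 1 / Real.log s * (Real.log b - Real.log a) := by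
  have hlog := Real.log_le_log (by positivity) h
  rw [Real.log_mul (by positivity) ha.ne', Real.log_pow] at hlog
  rw [one_div_mul_eq_div, le_div_iff₀ (Real.log_pos hs)]
  linarith

/-- Tijdeman's number-of-zeros lemma: for `f` analytic and not identically zero on the
closed disk of radius `(st+s+t)R`, the number of zeros of `f` counted with multiplicity
in the closed disk of radius `R` is at most
`(1/log s)(log max_{|z|≤(st+s+t)R} |f(z)| − log max_{|z|≤tR} |f(z)|)`. -/
theorem tijdeman_number_of_zeros
    (R s t : ℝ) (hR : 0 < R) (hs : 1 < s) (ht : 0 < t)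
    (f : ℂ → ℂ)
    (hf : ∀ z ∈ closedBall (0 : ℂ) ((s * t + s + t) * R), AnalyticAt ℂ f z)
    (hne : ∃ z ∈ closedBall (0 : ℂ) ((s * t + s + t) * R), f z ≠ 0) :
    ∀ Z : Finset ℂ, (∀ z ∈ Z, z ∈ closedBall (0 : ℂ) R ∧ f z = 0) →
      (∑ z ∈ Z, (zeroOrder f z : ℝ))
        ≤ (1 / Real.log s) *
          (Real.log (⨆ z : closedBall (0 : ℂ) ((s * t + s + t) * R), ‖f (z : ℂ)‖)
            - Real.log (⨆ z : closedBall (0 : ℂ) (t * R), ‖f (z : ℂ)‖)) := by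
  intro Z hZ
  set ρ := (s * t + s + t) * R
  have hρ : 0 < ρ := by positivity
  have hRρ : closedBall (0 : ℂ) R ⊆ closedBall 0 ρ :=
    closedBall_subset_closedBall (by nlinarith [mul_pos (mul_pos (by linarith : 0 < s) ht) hR])
  have hrρ : closedBall (0 : ℂ) (t * R) ⊆ closedBall 0 ρ :=
    closedBall_subset_closedBall (by nlinarith)
  have hcont : ContinuousOn (‖f ·‖) (closedBall 0 ρ) := (AnalyticOnNhd.continuousOn hf).norm
  obtain ⟨zρ, hzρ, hmaxρ⟩ := (isCompact_closedBall (0 : ℂ) ρ).exists_isMaxOn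
    (nonempty_closedBall.2 hρ.le) hcont
  obtain ⟨zr, hzr, hmaxr⟩ := (isCompact_closedBall (0 : ℂ) (t * R)).exists_isMaxOn
    (nonempty_closedBall.2 (by positivity)) (hcont.mono hrρ)
  have hfzr : 0 < ‖f zr‖ := by
    obtain ⟨z, hz, hfz⟩ := AnalyticOnNhd.exists_mem_ne_zero_of_mem_nhds hf
      (convex_closedBall _ _).isPreconnected hne (mem_closedBall_self hρ.le)
      (closedBall_mem_nhds _ (by positivity : 0 < t * R))
    exact (norm_pos_iff.2 hfz).trans_le (hmaxr hz)
  obtain ⟨G, hG, hfG⟩ := AnalyticOnNhd.exists_eq_prod_pow_mul hf Z (zeroOrder f) fun z hz =>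
    ⟨hRρ (hZ z hz).1, natCast_zeroOrder_le_analyticOrderAt (hf z (hRρ (hZ z hz).1))⟩
  have hbound : s ^ (∑ z ∈ Z, zeroOrder f z) * ‖f zr‖ ≤ ‖f zρ‖ :=
    pow_mul_norm_le_of_eq_prod_mul hρ hG hfG
      (fun w hw => hmaxρ (sphere_subset_closedBall hw)) (hrρ hzr) (by positivity)
      fun z hz => mul_norm_sub_le_norm_sq_sub_conj_mul hR.le hs.le ht.le
        (mem_closedBall_zero_iff.1 (hZ z hz).1) (mem_closedBall_zero_iff.1 hzr)
  rw [hmaxρ.iSup_eq hzρ, hmaxr.iSup_eq hzr, ← Nat.cast_sum]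
  exact natCast_le_div_log_of_pow_mul_le hs hfzr hbound
end
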